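/- Let (E,h) be a hermitian holomorphic vector bundle on a complex manifold with h positive semidefinite and locally bounded, and s a holomorphic section with |s|²_h(y₀) maximal and positive at an interior point y₀ of the domain of smoothness of h. If the curvature inequality √-1 Θ_g(L) ≤ √-1 ∂∂̄ log|s|²_h + √-1{θ(s), θ(s)}_h / |s|²_h holds near y₀ and √-1 Θ_g(L) is positive definite at y₀, then θ(s)(ξ) ≠ 0 for every nonzero tangent vector ξ at y₀. -/

import Mathlib

open Topology Filter Set Metric


/-!
STATEMENT 17 (core pointwise step of the generic Torelli theorem).
Let `(E,h)` be a hermitian holomorphic vector bundle (with `h` positive semidefinite and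
locally bounded) and `s` a holomorphic section whose squared norm `φ = |s|²_h` attains a
positive maximum at an interior point `y₀` of the domain of smoothness `U` of `h`.  If the
curvature inequality
  `√-1 Θ_g(L) ≤ √-1 ∂∂̄ log |s|²_h + √-1 {θ(s), θ(s)}_h / |s|²_h`
holds (as (1,1)-forms) and `√-1 Θ_g(L)` is positive definite at `y₀`, then `θ(s)(ξ) ≠ 0` for
every nonzero tangent vector `ξ` at `y₀`.
Formalization in a chart `U ⊆ ℂⁿ`:  `φ` is smooth and nonnegative on `U`, maximal and positive
at `y₀ ∈ U`;  `θs : ℂⁿ → G` is the value of `θ(s)` at `y₀` (a linear map from the tangent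
space to the fiber `G = (L⁻¹ ⊗ E^{n-1,1})_{y₀}`, an inner product space);  `α ξ` is
`√-1 Θ_g(L)(ξ, ξ̄)` at `y₀`;  `√-1 ∂∂̄ log φ (ξ, ξ̄)` at `y₀` is `(1/4)` times the Laplacian at
`0` of `t ↦ log φ(y₀ + tξ)` (second derivatives along the real and imaginary axes); and
`√-1{θ(s),θ(s)}_h(ξ,ξ̄) = ‖θs ξ‖²`.
-/

/-- If a real function is `C²` on a ball around `0` and attains a maximum at `0`,
then its second derivative at `0` is nonpositive. -/
lemma second_deriv_nonpos_of_max {f : ℝ → ℝ} {ε : ℝ} (hε : 0 < ε)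
    (hf : ContDiffOn ℝ 2 f (Metric.ball 0 ε))
    (hmaxb : ∀ x ∈ Metric.ball (0 : ℝ) ε, f x ≤ f 0) :
    iteratedDeriv 2 f 0 ≤ 0 := by
  by_contra hcon
  push_neg at hcon
  set g := deriv f with hgdef
  have hopen : IsOpen (Metric.ball (0 : ℝ) ε) := Metric.isOpen_ball
  have hball : Metric.ball (0 : ℝ) ε ∈ 𝓝 (0 : ℝ) := Metric.ball_mem_nhds _ hε
  have hgC : ContDiffOn ℝ 1 g (Metric.ball 0 ε) :=
    hf.deriv_of_isOpen hopen (by norm_num)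
  have hc : (0 : ℝ) < deriv g 0 := by
    have h2 : iteratedDeriv 2 f 0 = deriv g 0 := by
      rw [show (2 : ℕ) = 1 + 1 from rfl, iteratedDeriv_succ, iteratedDeriv_one]
    linarith [hcon, h2 ▸ hcon]
  have hlm : IsLocalMax f 0 := Filter.eventually_of_mem hball hmaxb
  have hg0 : g 0 = 0 := hlm.deriv_eq_zero
  have hgd : HasDerivAt g (deriv g 0) 0 :=
    (((hgC.contDiffAt hball)).differentiableAt one_ne_zero).hasDerivAt
  have hslope := hasDerivAt_iff_tendsto_slope.1 hgd
  have h1 : ∀ᶠ x in 𝓝[>] (0 : ℝ), 0 < slope g 0 x := by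
    have hmono : 𝓝[>] (0 : ℝ) ≤ 𝓝[≠] (0 : ℝ) :=
      nhdsWithin_mono _ (fun x hx => ne_of_gt hx)
    exact (hslope.mono_left hmono).eventually (eventually_gt_nhds hc)
  obtain ⟨u, hu0, hu⟩ := mem_nhdsGT_iff_exists_Ioo_subset.1 h1
  set b : ℝ := min u ε / 2 with hbdef
  have hb0 : 0 < b := by
    have : 0 < min u ε := lt_min hu0 hε
    positivity
  have hbu : b < u := by
    have h1 : b < min u ε := by
      have : 0 < min u ε := lt_min hu0 hε
      simpa [hbdef] using half_lt_self this
    exact lt_of_lt_of_le h1 (min_le_left _ _)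
  have hbe : b < ε := by
    have h1 : b < min u ε := by
      have : 0 < min u ε := lt_min hu0 hε
      simpa [hbdef] using half_lt_self this
    exact lt_of_lt_of_le h1 (min_le_right _ _)
  have hsub : Set.Icc (0 : ℝ) b ⊆ Metric.ball (0 : ℝ) ε := by
    intro x hx
    rw [Metric.mem_ball, Real.dist_eq, sub_zero, abs_of_nonneg hx.1]
    exact lt_of_le_of_lt hx.2 hbe
  have hgpos : ∀ x ∈ Set.Ioo (0 : ℝ) b, 0 < g x := by
    intro x hx
    have hxu : x ∈ Set.Ioo (0 : ℝ) u := ⟨hx.1, lt_trans hx.2 hbu⟩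
    have hs' : 0 < slope g 0 x := hu hxu
    rw [slope_def_field, hg0, sub_zero, sub_zero] at hs'
    rcases div_pos_iff.mp hs' with ⟨h, _⟩ | ⟨_, h⟩
    · exact h
    · linarith [hx.1]
  have hcontf : ContinuousOn f (Set.Icc (0 : ℝ) b) :=
    (hf.continuousOn).mono hsub
  have hmono : StrictMonoOn f (Set.Icc (0 : ℝ) b) := by
    apply strictMonoOn_of_deriv_pos (convex_Icc 0 b) hcontf
    intro x hx
    rw [interior_Icc] at hx
    exact hgpos x hx
  have hlt : f 0 < f b :=
    hmono (Set.left_mem_Icc.2 (le_of_lt hb0)) (Set.right_mem_Icc.2 (le_of_lt hb0)) hb0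
  have : f b ≤ f 0 := hmaxb b (hsub (Set.right_mem_Icc.2 (le_of_lt hb0)))
  linarith

/-- Along any complex line through an interior positive maximum of a smooth nonnegative
function, the second derivative of the log at the maximum is nonpositive. -/
lemma line_log_iteratedDeriv_two_nonpos {n : ℕ} {U : Set (Fin n → ℂ)} (hU : IsOpen U)
    {y₀ : Fin n → ℂ} (hy₀ : y₀ ∈ U) {φ : (Fin n → ℂ) → ℝ}
    (hφsmooth : ContDiffOn ℝ (⊤ : ℕ∞) φ U)
    (hmax : ∀ y ∈ U, φ y ≤ φ y₀) (hpos : 0 < φ y₀) (v : Fin n → ℂ) :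
    iteratedDeriv 2 (fun x : ℝ => Real.log (φ (y₀ + (x : ℂ) • v))) 0 ≤ 0 := by
  set γ : ℝ → (Fin n → ℂ) := fun x => y₀ + (x : ℂ) • v with hγdef
  have hγ : ContDiff ℝ (⊤ : ℕ∞) γ :=
    contDiff_const.add (Complex.ofRealCLM.smulRight v).contDiff
  have hγ0 : γ 0 = y₀ := by simp [hγdef]
  -- the set where φ is positive
  have hW : IsOpen (U ∩ φ ⁻¹' Set.Ioi (0 : ℝ)) :=
    (hφsmooth.continuousOn).isOpen_inter_preimage hU isOpen_Ioi
  have hy₀W : y₀ ∈ U ∩ φ ⁻¹' Set.Ioi (0 : ℝ) := ⟨hy₀, hpos⟩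
  have hpre : IsOpen (γ ⁻¹' (U ∩ φ ⁻¹' Set.Ioi (0 : ℝ))) := hW.preimage hγ.continuous
  have h0pre : (0 : ℝ) ∈ γ ⁻¹' (U ∩ φ ⁻¹' Set.Ioi (0 : ℝ)) := by
    simp [Set.mem_preimage, hγ0]; exact hy₀W
  obtain ⟨ε, hε, hball⟩ := Metric.isOpen_iff.1 hpre 0 h0pre
  have hmem : ∀ x ∈ Metric.ball (0 : ℝ) ε, γ x ∈ U ∧ 0 < φ (γ x) := by
    intro x hx
    exact hball hx
  have hsm : ContDiffOn ℝ 2 (fun x : ℝ => Real.log (φ (γ x))) (Metric.ball 0 ε) := by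
    have hφγ : ContDiffOn ℝ (⊤ : ℕ∞) (fun x => φ (γ x)) (Metric.ball 0 ε) :=
      hφsmooth.comp (hγ.contDiffOn) (fun x hx => (hmem x hx).1)
    have hlog : ContDiffOn ℝ (⊤ : ℕ∞) (fun x : ℝ => Real.log (φ (γ x))) (Metric.ball 0 ε) :=
      Real.contDiffOn_log.comp hφγ (fun x hx => ne_of_gt (hmem x hx).2)
    exact hlog.of_le (WithTop.coe_le_coe.2 le_top)
  have hmaxb : ∀ x ∈ Metric.ball (0 : ℝ) ε, Real.log (φ (γ x)) ≤ Real.log (φ (γ 0)) := by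
    intro x hx
    rw [hγ0]
    exact Real.log_le_log (hmem x hx).2 (hmax _ (hmem x hx).1)
  have := second_deriv_nonpos_of_max hε hsm hmaxb
  simpa [hγdef, hγ0] using this

theorem torelli_pointwise_injectivity
    {n : ℕ} {G : Type*} [NormedAddCommGroup G] [InnerProductSpace ℂ G]
    (U : Set (Fin n → ℂ)) (hU : IsOpen U)
    (y₀ : Fin n → ℂ) (hy₀ : y₀ ∈ U)
    (φ : (Fin n → ℂ) → ℝ)             -- the (norm)² function |s|²_h
    (hφsmooth : ContDiffOn ℝ (⊤ : ℕ∞) φ U)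
    (hφnonneg : ∀ y ∈ U, 0 ≤ φ y)     -- h is positive semidefinite
    (hmax : ∀ y ∈ U, φ y ≤ φ y₀)      -- |s|²_h is maximal at y₀
    (hpos : 0 < φ y₀)
    (θs : (Fin n → ℂ) →ₗ[ℂ] G)        -- θ(s) at y₀, as a map on tangent vectors
    (α : (Fin n → ℂ) → ℝ)             -- ξ ↦ √-1 Θ_g(L)(ξ,ξ̄) at y₀
    (hαpos : ∀ ξ, ξ ≠ 0 → 0 < α ξ)    -- √-1 Θ_g(L) is positive definite at y₀
    (hineq : ∀ ξ : Fin n → ℂ,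
      α ξ ≤ (1 / 4) * (iteratedDeriv 2 (fun x : ℝ => Real.log (φ (y₀ + (x : ℂ) • ξ))) 0
          + iteratedDeriv 2 (fun y : ℝ => Real.log (φ (y₀ + ((y : ℂ) * Complex.I) • ξ))) 0)
        + ‖θs ξ‖ ^ 2 / φ y₀) :
    ∀ ξ : Fin n → ℂ, ξ ≠ 0 → θs ξ ≠ 0 := by
  
  intro ξ hξ hzero
  have h1 := line_log_iteratedDeriv_two_nonpos hU hy₀ hφsmooth hmax hpos ξ
  have h2 := line_log_iteratedDeriv_two_nonpos hU hy₀ hφsmooth hmax hpos (Complex.I • ξ)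
  have heq : (fun y : ℝ => Real.log (φ (y₀ + ((y : ℂ) * Complex.I) • ξ)))
      = fun y : ℝ => Real.log (φ (y₀ + (y : ℂ) • (Complex.I • ξ))) := by
    funext y; rw [mul_smul]
  have hin := hineq ξ
  rw [heq, hzero, norm_zero] at hin
  have hz : (0 : ℝ) ^ 2 / φ y₀ = 0 := by
    simp
  rw [hz] at hin
  have := hαpos ξ hξ
  linarith
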